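/- arXiv:math/0605579 — 3 statements merged into one kernel-verified Lean document; each statement's English description precedes it below -/
import Mathlib

section
/- Let n ≥ 1, p ≥ 2 and let w be any positive braid word on p strands. Then the explicitly described beginning of the sl(n) Khovanov–Rozansky chain complex of the closure of w is exact at homological degree 1: ker d¹ = im d⁰. (This is the paper's Theorem 19: the first sl(n) homology group of any positive braid knot is trivial for every positive integer n, expressed via the explicit Khovanov–Rozansky cube of a positive braid closure.) -/
/-!
Statement 1 (Theorem 19): for `n ≥ 1`, `p ≥ 2` and any positive braid word `w` on `p`
strands, the explicitly described beginning `C⁰ → C¹ → C²` of the `sl(n)`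
Khovanov–Rozansky chain complex of the closure of `w` is exact at homological degree 1:
`ker d¹ = im d⁰`.

Encoding: `p = p0 + 2` (covering all `p ≥ 2`) and the braid word is a list `w` of
letters in `Fin (p0+1)` (letter `a` = crossing between strands `a` and `a+1`, 0-based).
We realise all the tensor products of the algebras `A_i, B_i, C_i, F_{i,j}` as explicit
quotients of the single polynomial ring `R = ℚ[x_0, …, x_{p−1}, y]`
(`= MvPolynomial (Option (Fin (p0+2))) ℚ`, the variable `none` being `y`): e.g.
`A_1 ⊗ ⋯ ⊗ A_p = R/(y, x_0^n, …, x_{p−1}^n)` and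
`A_1 ⊗ ⋯ ⊗ B_a ⊗ ⋯ ⊗ A_p = R/(y, x_0^n, …, x_{p−1}^n, π^n_{a,a+1}, π^{n−1}_{a,a+1})`
(the generators `x_a^n`, `x_{a+1}^n` being redundant since
`x_a^n = π^n_{a,a+1} − x_{a+1} π^{n−1}_{a,a+1}`, these are exactly the stated algebras).
The differentials are the (signed) natural quotient maps, except for the same-letter
components of `d¹`, which are induced by `f ↦ (y − x_{a+1}) · f|_{y:=0}`, i.e. the
natural map `B_a → C_a` followed by multiplication by `(y − x_{a+1})`, the component out
of the larger crossing of a pair carrying a minus sign.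
-/

namespace KRPositiveBraid

open MvPolynomial

variable (p0 n : ℕ)

/-- The ambient polynomial ring `R = ℚ[x_0, …, x_{p−1}, y]`. -/
abbrev R := MvPolynomial (Option (Fin (p0 + 2))) ℚ

/-- `π^k_{i,j} = Σ_{l=0}^k x_i^l x_j^{k−l}`. -/
noncomputable def pin (k : ℕ) (i j : Fin (p0 + 2)) : R p0 :=
  ∑ l ∈ Finset.range (k + 1), X (some i) ^ l * X (some j) ^ (k - l)

/-- The generators `x_k^n` (killing each strand variable to the `n`-th power). -/
def baseGens : Set (R p0) := Set.range (fun k : Fin (p0 + 2) => X (some k) ^ n)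

/-- The pair of generators `π^n_{a,a+1}`, `π^{n−1}_{a,a+1}` of the wide-edge algebra
`B_a` at the letter `a`. -/
noncomputable def piGens (a : Fin (p0 + 1)) : Set (R p0) :=
  {pin p0 n a.castSucc a.succ, pin p0 (n - 1) a.castSucc a.succ}

/-- Generators of the ideal presenting `C⁰ = A_1 ⊗ ⋯ ⊗ A_p`. -/
def gens0 : Set (R p0) := baseGens p0 n ∪ {X none}

/-- Generators of the ideal presenting `V̄_c = A_1 ⊗ ⋯ ⊗ B_a ⊗ ⋯ ⊗ A_p`. -/
noncomputable def gensC (a : Fin (p0 + 1)) : Set (R p0) :=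
  gens0 p0 n ∪ piGens p0 n a

/-- Generators of the ideal presenting `A_1 ⊗ ⋯ ⊗ C_a ⊗ ⋯ ⊗ A_p` (the same-letter
double resolution; here `y` survives as the extra variable of `C_a`). -/
noncomputable def gensSame (a : Fin (p0 + 1)) : Set (R p0) :=
  (baseGens p0 n ∪ piGens p0 n a) ∪
    {(X none - X (some a.castSucc)) * (X none - X (some a.succ))}

/-- Generators of the ideal presenting the different-letter double resolution
`⋯ ⊗ B_a ⊗ ⋯ ⊗ B_b ⊗ ⋯`. -/
noncomputable def gensDiff (a b : Fin (p0 + 1)) : Set (R p0) :=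
  gensC p0 n a ∪ piGens p0 n b

noncomputable def I0 : Ideal (R p0) := Ideal.span (gens0 p0 n)
noncomputable def Ic (a : Fin (p0 + 1)) : Ideal (R p0) := Ideal.span (gensC p0 n a)
noncomputable def Jsame (a : Fin (p0 + 1)) : Ideal (R p0) :=
  Ideal.span (gensSame p0 n a)
noncomputable def Jdiff (a b : Fin (p0 + 1)) : Ideal (R p0) :=
  Ideal.span (gensDiff p0 n a b)

/-- A quotient of `R` by (the ℚ-submodule underlying) an ideal, as a ℚ-vector space. -/
abbrev QV (I : Ideal (R p0)) := R p0 ⧸ Submodule.restrictScalars ℚ I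

/-- The substitution `y ↦ 0` (and `x_i ↦ x_i`), as a ℚ-algebra endomorphism of `R`. -/
noncomputable def killY : R p0 →ₐ[ℚ] R p0 :=
  aeval (fun v => Option.elim v 0 (fun i => X (some i)))

/-- `f ↦ (y − x_{a+1}) · f|_{y:=0}`: the ambient representative of the natural map
`B_a → C_a` followed by multiplication by `y − x_{a+1}`. -/
noncomputable def sigmaMap (a : Fin (p0 + 1)) : R p0 →ₗ[ℚ] R p0 :=
  (LinearMap.mulLeft ℚ (X none - X (some a.succ))).comp (killY p0).toLinearMap

lemma killY_mem_Jsame (a : Fin (p0 + 1)) :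
    ∀ g ∈ gensC p0 n a, killY p0 g ∈ Jsame p0 n a := by
  rintro g (((⟨k, rfl⟩ | rfl) | (rfl | rfl)))
  · -- `x_k^n`
    refine Ideal.subset_span ?_
    left; left
    refine ⟨k, ?_⟩
    simp [killY, map_pow]
  · -- `y ↦ 0`
    simp only [killY, aeval_X, Option.elim]
    exact (Jsame p0 n a).zero_mem
  · -- `π^n`
    have : killY p0 (pin p0 n a.castSucc a.succ) = pin p0 n a.castSucc a.succ := by
      simp [killY, pin, map_sum, map_mul, map_pow]
    rw [this]
    exact Ideal.subset_span (Or.inl (Or.inr (Or.inl rfl)))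
  · -- `π^{n−1}`
    have : killY p0 (pin p0 (n - 1) a.castSucc a.succ)
        = pin p0 (n - 1) a.castSucc a.succ := by
      simp [killY, pin, map_sum, map_mul, map_pow]
    rw [this]
    exact Ideal.subset_span (Or.inl (Or.inr (Or.inr rfl)))

lemma sigmaMap_maps (a : Fin (p0 + 1)) :
    Submodule.restrictScalars ℚ (Ic p0 n a) ≤
      Submodule.comap (sigmaMap p0 a) (Submodule.restrictScalars ℚ (Jsame p0 n a)) := by
  intro f hf
  simp only [Submodule.restrictScalars_mem] at hf
  simp only [Submodule.mem_comap, Submodule.restrictScalars_mem, sigmaMap,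
    LinearMap.coe_comp, Function.comp_apply, AlgHom.toLinearMap_apply,
    LinearMap.mulLeft_apply]
  have hmem : killY p0 f ∈ Jsame p0 n a := by
    have hmap : Ideal.map (killY p0).toRingHom (Ic p0 n a) ≤ Jsame p0 n a := by
      rw [Ic, Ideal.map_span]
      refine Ideal.span_le.2 ?_
      rintro g ⟨g', hg', rfl⟩
      exact killY_mem_Jsame p0 n a g' hg'
    exact hmap (Ideal.mem_map_of_mem _ hf)
  exact Ideal.mul_mem_left _ _ hmem

variable (w : List (Fin (p0 + 1)))

/-- The letter (0-based) of the crossing `c`. -/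
def letter (c : Fin w.length) : ℕ := (w.get c : ℕ)

/-- The ordering of the crossings: first by letter, then by position in the word. -/
def cLT (c d : Fin w.length) : Prop :=
  letter p0 w c < letter p0 w d ∨ (letter p0 w c = letter p0 w d ∧ c.1 < d.1)

/-- The ordered pairs of distinct crossings with the same letter. -/
def SamePair :=
  {cd : Fin w.length × Fin w.length //
    cLT p0 w cd.1 cd.2 ∧ letter p0 w cd.1 = letter p0 w cd.2}

/-- The ordered pairs of crossings with different letters. -/
def DiffPair :=
  {cd : Fin w.length × Fin w.length //
    cLT p0 w cd.1 cd.2 ∧ letter p0 w cd.1 ≠ letter p0 w cd.2}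

/-- `C⁰ = A_1 ⊗ ⋯ ⊗ A_p`. -/
noncomputable abbrev C0 := QV p0 (I0 p0 n)

/-- `C¹ = ⊕_c V̄_c`. -/
noncomputable abbrev C1 := Π c : Fin w.length, QV p0 (Ic p0 n (w.get c))

/-- `C² = ⊕_{c<d} V̄_{c,d}` (the same-letter part and the different-letter part). -/
noncomputable abbrev C2 :=
  (Π pr : SamePair p0 w, QV p0 (Jsame p0 n (w.get pr.1.1))) ×
  (Π pr : DiffPair p0 w, QV p0 (Jdiff p0 n (w.get pr.1.1) (w.get pr.1.2)))

/-- `d⁰ : C⁰ → C¹`: each component is the natural quotient map. -/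
noncomputable def d0 : C0 p0 n →ₗ[ℚ] C1 p0 n w :=
  LinearMap.pi (fun c =>
    Submodule.mapQ _ _ LinearMap.id (by
      intro x hx
      exact Ideal.span_mono Set.subset_union_left hx))

/-- The same-letter part of `d¹`: for a pair `c < d` of crossings of the same letter
`a`, the component out of `V̄_c` is induced by `f ↦ (y − x_{a+1}) · f|_{y:=0}` (the
natural map `B_a → C_a` followed by multiplication by `y − x_{a+1}`), and the component
out of `V̄_d` is its negative. -/
noncomputable def d1same :
    C1 p0 n w →ₗ[ℚ] Π pr : SamePair p0 w, QV p0 (Jsame p0 n (w.get pr.1.1)) :=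
  LinearMap.pi (fun pr =>
    (Submodule.mapQ _ _ (sigmaMap p0 (w.get pr.1.1))
        (sigmaMap_maps p0 n (w.get pr.1.1))).comp (LinearMap.proj pr.1.1)
    - (Submodule.mapQ _ _ (sigmaMap p0 (w.get pr.1.1)) (by
          have hEq : w.get pr.1.2 = w.get pr.1.1 := Fin.val_injective pr.2.2.symm
          rw [hEq]
          exact sigmaMap_maps p0 n (w.get pr.1.1))).comp (LinearMap.proj pr.1.2))

/-- The different-letter part of `d¹`: natural quotient maps, the component out of the
larger crossing carrying a minus sign. -/
noncomputable def d1diff :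
    C1 p0 n w →ₗ[ℚ]
      Π pr : DiffPair p0 w, QV p0 (Jdiff p0 n (w.get pr.1.1) (w.get pr.1.2)) :=
  LinearMap.pi (fun pr =>
    (Submodule.mapQ _ _ LinearMap.id (by
        intro x hx
        exact Ideal.span_mono Set.subset_union_left hx)).comp (LinearMap.proj pr.1.1)
    - (Submodule.mapQ _ _ LinearMap.id (by
        intro x hx
        refine Ideal.span_mono ?_ hx
        exact Set.union_subset (Set.subset_union_left.trans Set.subset_union_left)
          Set.subset_union_right)).comp (LinearMap.proj pr.1.2))

/-- `d¹ : C¹ → C²`. -/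
noncomputable def d1 : C1 p0 n w →ₗ[ℚ] C2 p0 n w :=
  LinearMap.prod (d1same p0 n w) (d1diff p0 n w)

end KRPositiveBraid

/-!
A cycle of `C¹` lifts to a family `(f_c)` of polynomials. For crossings `c, d` of the same letter
`a`, the cycle condition says that `(y - x_{a+1}) · (f_c - f_d)|_{y=0}` vanishes in
`R/Jsame_a ≅ (R/Ic_a)[y]/((y - x_a)(y - x_{a+1}))`, which is free over `R/Ic_a` on `1, y`; hence
`f_c ≡ f_d` modulo `Ic_a`. For crossings of letters `a < b` it says `f_c ≡ f_d` modulo `Ic_a + Ic_b`.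

A common lift `F`, with `F ≡ f_c` modulo `Ic_a` for every crossing `c` of letter `a`, is built by
adding the letters in increasing order. When the largest letter `m` is added, `F` is corrected by
the remainder of `F - f_c` on division by `π^{n-1}_{m,m+1}`, which is monic in `x_{m+1}`. Division
is linear over the polynomials free of `x_{m+1}`, and these contain all generators of `Ic_b`,
`b < m`, except `x_{m+1}^n ≡ x_m^n`. So the remainder of an element of `Ic_b + Ic_m` lies in
`Ic_b`, and the correction keeps the congruences already achieved.
-/

namespace Polynomial

theorem eq_zero_of_X_sub_C_mul_X_sub_C_dvd {A : Type*} [CommRing A] {u v c : A}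
    (h : (X - C u) * (X - C v) ∣ (X - C v) * C c) : c = 0 := by
  nontriviality A
  have hq : ((X - C u) * (X - C v)).Monic := (monic_X_sub_C u).mul (monic_X_sub_C v)
  have hlin : (X - C v) * C c = 0 := by
    by_contra hne
    refine hq.not_dvd_of_natDegree_lt hne ?_ h
    calc ((X - C v) * C c).natDegree ≤ 1 := natDegree_mul_le.trans (by simp)
      _ < ((X - C u) * (X - C v)).natDegree := by
        rw [(monic_X_sub_C u).natDegree_mul (monic_X_sub_C v)]; simp
  simpa using congrArg (coeff · 1) hlin

end Polynomial

namespace MvPolynomial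

lemma X_mem_range_rename_subtypeNe {R σ : Type*} [CommSemiring R] {v i : σ} (hi : i ≠ v) :
    (X i : MvPolynomial σ R) ∈ (rename (Subtype.val : {k // k ≠ v} → σ)).range :=
  ⟨X ⟨i, hi⟩, rename_X _ _⟩

variable (R : Type*) {σ : Type*} [CommRing R] [DecidableEq σ]

noncomputable def equivPolynomialSubtypeNe (v : σ) :
    MvPolynomial σ R ≃ₐ[R] Polynomial (MvPolynomial {k // k ≠ v} R) :=
  (renameEquiv R (Equiv.optionSubtypeNe v).symm).trans (optionEquivLeft R _)

variable {R}

@[simp]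
lemma equivPolynomialSubtypeNe_X_self (v : σ) :
    equivPolynomialSubtypeNe R v (X v) = Polynomial.X := by
  simp [equivPolynomialSubtypeNe, optionEquivLeft_X_none]

@[simp]
lemma equivPolynomialSubtypeNe_rename (v : σ) (g : MvPolynomial {k // k ≠ v} R) :
    equivPolynomialSubtypeNe R v (rename Subtype.val g) = Polynomial.C g := by
  suffices (equivPolynomialSubtypeNe R v).toAlgHom.comp (rename Subtype.val) =
      Polynomial.CAlgHom from DFunLike.congr_fun this g
  apply algHom_ext
  intro k
  simp [equivPolynomialSubtypeNe, k.2, optionEquivLeft_X_some, Polynomial.CAlgHom]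

lemma equivPolynomialSubtypeNe_X_of_ne {v k : σ} (hk : k ≠ v) :
    equivPolynomialSubtypeNe R v (X k) = Polynomial.C (X ⟨k, hk⟩) := by
  rw [← equivPolynomialSubtypeNe_rename, rename_X]

noncomputable def modByMonicIn (v : σ) (q : MvPolynomial σ R) :
    MvPolynomial σ R →ₗ[R] MvPolynomial σ R :=
  (equivPolynomialSubtypeNe R v).symm.toLinearMap ∘ₗ
    (Polynomial.modByMonicHom (equivPolynomialSubtypeNe R v q)).restrictScalars R ∘ₗ
      (equivPolynomialSubtypeNe R v).toLinearMap

@[simp]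
lemma equivPolynomialSubtypeNe_modByMonicIn (v : σ) (q f : MvPolynomial σ R) :
    equivPolynomialSubtypeNe R v (modByMonicIn v q f) =
      equivPolynomialSubtypeNe R v f %ₘ equivPolynomialSubtypeNe R v q := by
  simp [modByMonicIn]

lemma modByMonicIn_mul_of_mem_range {v : σ} {g : MvPolynomial σ R}
    (hg : g ∈ (rename (Subtype.val : {k // k ≠ v} → σ)).range) (q f : MvPolynomial σ R) :
    modByMonicIn v q (g * f) = g * modByMonicIn v q f := by
  obtain ⟨g, rfl⟩ := hg
  apply (equivPolynomialSubtypeNe R v).injective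
  simp [← Polynomial.smul_eq_C_mul, Polynomial.smul_modByMonic]

lemma sub_modByMonicIn_mem_span (v : σ) (q f : MvPolynomial σ R) :
    f - modByMonicIn v q f ∈ Ideal.span {q} := by
  set e := equivPolynomialSubtypeNe R v
  refine Ideal.mem_span_singleton'.2 ⟨e.symm (e f /ₘ e q), e.injective ?_⟩
  rw [map_mul, map_sub, e.apply_symm_apply, equivPolynomialSubtypeNe_modByMonicIn]
  linear_combination Polynomial.modByMonic_add_div (e f) (e q)

lemma modByMonicIn_mul_self {v : σ} {q : MvPolynomial σ R}
    (hq : (equivPolynomialSubtypeNe R v q).Monic) (r : MvPolynomial σ R) :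
    modByMonicIn v q (r * q) = 0 := by
  apply (equivPolynomialSubtypeNe R v).injective
  simp [Polynomial.modByMonic_eq_zero_iff_dvd hq]

end MvPolynomial

namespace KRPositiveBraid

open MvPolynomial

variable {p0 n : ℕ}

lemma pin_pred_mul_sub (hn : 0 < n) (i j : Fin (p0 + 2)) :
    pin p0 (n - 1) i j * (X (some j) - X (some i)) = X (some j) ^ n - X (some i) ^ n := by
  rw [pin, Nat.sub_add_cancel hn, geom_sum₂_comm, geom_sum₂_mul]

lemma pin_eq_X_mul_pin_pred_add (hn : 0 < n) (i j : Fin (p0 + 2)) :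
    pin p0 n i j = X (some i) * pin p0 (n - 1) i j + X (some j) ^ n := by
  rw [pin, pin, Finset.sum_range_succ', Nat.sub_add_cancel hn, Finset.mul_sum]
  congr 1
  · refine Finset.sum_congr rfl fun l hl => ?_
    rw [Finset.mem_range] at hl
    rw [show n - (l + 1) = n - 1 - l by omega, pow_succ', mul_assoc]
  · simp

lemma monic_pin_pred (hn : 0 < n) {i j : Fin (p0 + 2)} (hij : i ≠ j) :
    (equivPolynomialSubtypeNe ℚ (some j) (pin p0 (n - 1) i j)).Monic := by
  have hi : (some i : Option (Fin (p0 + 2))) ≠ some j := by simpa using hij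
  have h := congrArg (equivPolynomialSubtypeNe ℚ (some j)) (pin_pred_mul_sub hn i j)
  simp only [map_mul, map_sub, map_pow, equivPolynomialSubtypeNe_X_self,
    equivPolynomialSubtypeNe_X_of_ne hi] at h
  rw [← Polynomial.C_pow] at h
  exact (Polynomial.monic_X_sub_C _).of_mul_monic_right (h ▸ Polynomial.monic_X_pow_sub_C _ hn.ne')

lemma pin_mem_range_rename {v : Option (Fin (p0 + 2))} {i j : Fin (p0 + 2)} (hi : some i ≠ v)
    (hj : some j ≠ v) (e : ℕ) :
    pin p0 e i j ∈ (rename (Subtype.val : {k // k ≠ v} → _)).range :=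
  Subalgebra.sum_mem _ fun _ _ => Subalgebra.mul_mem _
    (Subalgebra.pow_mem _ (X_mem_range_rename_subtypeNe hi) _)
    (Subalgebra.pow_mem _ (X_mem_range_rename_subtypeNe hj) _)

lemma I0_le_Ic (a : Fin (p0 + 1)) : I0 p0 n ≤ Ic p0 n a :=
  Ideal.span_mono Set.subset_union_left

lemma Ic_le_Jdiff (a b : Fin (p0 + 1)) : Ic p0 n a ≤ Jdiff p0 n a b :=
  Ideal.span_mono Set.subset_union_left

lemma X_pow_mem_Ic (a : Fin (p0 + 1)) (k : Fin (p0 + 2)) : X (some k) ^ n ∈ Ic p0 n a :=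
  I0_le_Ic a (Ideal.subset_span (Or.inl ⟨k, rfl⟩))

lemma pin_pred_mem_Ic (a : Fin (p0 + 1)) : pin p0 (n - 1) a.castSucc a.succ ∈ Ic p0 n a :=
  Ideal.subset_span (Or.inr (Or.inr rfl))

noncomputable def reduceAt (p0 n : ℕ) (m : Fin (p0 + 1)) : R p0 →ₗ[ℚ] R p0 :=
  modByMonicIn (some m.succ) (pin p0 (n - 1) m.castSucc m.succ)

lemma sub_reduceAt_mem_Ic (m : Fin (p0 + 1)) (f : R p0) : f - reduceAt p0 n m f ∈ Ic p0 n m :=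
  (Ideal.span_singleton_le_iff_mem _).2 (pin_pred_mem_Ic m) (sub_modByMonicIn_mem_span _ _ f)

lemma reduceAt_mul_pin_pred (hn : 0 < n) (m : Fin (p0 + 1)) (r : R p0) :
    reduceAt p0 n m (r * pin p0 (n - 1) m.castSucc m.succ) = 0 :=
  modByMonicIn_mul_self (monic_pin_pred hn (Fin.castSucc_lt_succ (i := m)).ne) r

lemma reduceAt_mul_X_succ_pow (hn : 0 < n) (m : Fin (p0 + 1)) (r : R p0) :
    reduceAt p0 n m (r * X (some m.succ) ^ n) = X (some m.castSucc) ^ n * reduceAt p0 n m r := by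
  have hne : (some m.castSucc : Option (Fin (p0 + 2))) ≠ some m.succ := by
    simpa using (Fin.castSucc_lt_succ (i := m)).ne
  have hsplit : r * X (some m.succ) ^ n = X (some m.castSucc) ^ n * r +
      r * (X (some m.succ) - X (some m.castSucc)) * pin p0 (n - 1) m.castSucc m.succ := by
    linear_combination (-r) * pin_pred_mul_sub hn m.castSucc m.succ
  rw [hsplit, map_add, reduceAt_mul_pin_pred hn, add_zero]
  exact modByMonicIn_mul_of_mem_range (Subalgebra.pow_mem _ (X_mem_range_rename_subtypeNe hne) _)
    _ r

lemma mem_range_rename_or_eq_X_pow_of_mem_gensC {b m : Fin (p0 + 1)} (hbm : b < m) {g : R p0}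
    (hg : g ∈ gensC p0 n b) :
    g ∈ (rename (Subtype.val : {k // k ≠ some m.succ} → _)).range ∨ g = X (some m.succ) ^ n := by
  have hb : ∀ k : Fin (p0 + 2), k.val ≤ b.val + 1 → (some k : Option _) ≠ some m.succ := by
    intro k hk h
    have := congrArg Fin.val (Option.some_injective _ h)
    simp only [Fin.val_succ] at this
    omega
  rcases hg with ((⟨k, rfl⟩ | rfl) | (rfl | rfl))
  · by_cases hk : k = m.succ
    · exact Or.inr (by rw [hk])
    · exact Or.inl (Subalgebra.pow_mem _ (X_mem_range_rename_subtypeNe (by simpa using hk)) _)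
  · exact Or.inl (X_mem_range_rename_subtypeNe (by simp))
  all_goals exact Or.inl (pin_mem_range_rename (hb _ (by simp)) (hb _ (by simp)) _)

lemma reduceAt_mul_mem_Ic_of_mem_gensDiff (hn : 0 < n) {b m : Fin (p0 + 1)} (hbm : b < m)
    {g : R p0} (hg : g ∈ gensDiff p0 n b m) (r : R p0) :
    reduceAt p0 n m (r * g) ∈ Ic p0 n b := by
  rcases hg with hg | (rfl | rfl)
  · rcases mem_range_rename_or_eq_X_pow_of_mem_gensC hbm hg with hrange | rfl
    · rw [mul_comm, reduceAt, modByMonicIn_mul_of_mem_range hrange]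
      exact Ideal.mul_mem_right _ _ (Ideal.subset_span hg)
    · rw [reduceAt_mul_X_succ_pow hn]
      exact Ideal.mul_mem_right _ _ (X_pow_mem_Ic b _)
  · rw [pin_eq_X_mul_pin_pred_add hn, mul_add, ← mul_assoc, map_add, reduceAt_mul_pin_pred hn,
      zero_add, reduceAt_mul_X_succ_pow hn]
    exact Ideal.mul_mem_right _ _ (X_pow_mem_Ic b _)
  · rw [reduceAt_mul_pin_pred hn]
    exact zero_mem _

lemma reduceAt_mem_Ic_of_mem_Jdiff (hn : 0 < n) {b m : Fin (p0 + 1)} (hbm : b < m) {f : R p0}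
    (hf : f ∈ Jdiff p0 n b m) : reduceAt p0 n m f ∈ Ic p0 n b := by
  suffices ∀ r, reduceAt p0 n m (r * f) ∈ Ic p0 n b by simpa using this 1
  induction hf using Submodule.span_induction with
  | mem g hg => exact reduceAt_mul_mem_Ic_of_mem_gensDiff hn hbm hg
  | zero => simp
  | add x y _ _ hx hy => exact fun r => by rw [mul_add, map_add]; exact add_mem (hx r) (hy r)
  | smul a x _ hx => exact fun r => by rw [smul_eq_mul, ← mul_assoc]; exact hx _

theorem exists_forall_sub_mem_Ic (hn : 0 < n) {ι : Type*} (ℓ : ι → Fin (p0 + 1)) (f : ι → R p0)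
    (hsame : ∀ c d, ℓ c = ℓ d → f c - f d ∈ Ic p0 n (ℓ c))
    (hdiff : ∀ c d, ℓ c < ℓ d → f c - f d ∈ Jdiff p0 n (ℓ c) (ℓ d)) :
    ∃ F, ∀ c, F - f c ∈ Ic p0 n (ℓ c) := by
  suffices ∀ L : Finset (Fin (p0 + 1)), ∃ F, ∀ c, ℓ c ∈ L → F - f c ∈ Ic p0 n (ℓ c) by
    simpa using this Finset.univ
  intro L
  induction L using Finset.induction_on_max with
  | empty => exact ⟨0, by simp⟩
  | insert m L hlt ih =>
    obtain ⟨F, hF⟩ := ih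
    rcases em (∃ c₀, ℓ c₀ = m) with ⟨c₀, rfl⟩ | hm
    · refine ⟨F - reduceAt p0 n (ℓ c₀) (F - f c₀), fun c hc => ?_⟩
      rcases Finset.mem_insert.1 hc with hc | hc
      · rw [hc]
        convert add_mem (sub_reduceAt_mem_Ic (ℓ c₀) (F - f c₀)) (hsame c₀ c hc.symm) using 1
        ring
      · have hJ : F - f c₀ ∈ Jdiff p0 n (ℓ c) (ℓ c₀) := by
          rw [← sub_add_sub_cancel F (f c) (f c₀)]
          exact add_mem (Ic_le_Jdiff _ _ (hF c hc)) (hdiff c c₀ (hlt _ hc))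
        have h := sub_mem (hF c hc) (reduceAt_mem_Ic_of_mem_Jdiff hn (hlt _ hc) hJ)
        rwa [sub_right_comm] at h
    · push Not at hm
      exact ⟨F, fun c hc => hF c ((Finset.mem_insert.1 hc).resolve_left (hm c))⟩

lemma killY_eq_self {a : Fin (p0 + 1)} {g : R p0} (hg : g ∈ baseGens p0 n ∪ piGens p0 n a) :
    killY p0 g = g := by
  rcases hg with ⟨k, rfl⟩ | rfl | rfl <;> simp [killY, pin]

noncomputable def toPolynomialQuotient (I : Ideal (R p0)) : R p0 →ₐ[ℚ] Polynomial (R p0 ⧸ I) :=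
  aeval fun v => Option.elim v Polynomial.X fun i => Polynomial.C (Ideal.Quotient.mk I (X (some i)))

lemma toPolynomialQuotient_killY {I : Ideal (R p0)} (hy : X none ∈ I) (g : R p0) :
    toPolynomialQuotient I (killY p0 g) = Polynomial.C (Ideal.Quotient.mk I g) := by
  suffices (toPolynomialQuotient I).comp (killY p0) =
      Polynomial.CAlgHom.comp (Ideal.Quotient.mkₐ ℚ I) from DFunLike.congr_fun this g
  apply algHom_ext
  rintro (_ | i)
  · simp [toPolynomialQuotient, killY, Ideal.Quotient.eq_zero_iff_mem.2 hy]
  · simp [toPolynomialQuotient, killY]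

lemma mem_Ic_of_sigmaMap_mem {a : Fin (p0 + 1)} {f : R p0} (h : sigmaMap p0 a f ∈ Jsame p0 n a) :
    f ∈ Ic p0 n a := by
  set Θ := toPolynomialQuotient (Ic p0 n a)
  have hΘ := toPolynomialQuotient_killY (I := Ic p0 n a) (Ideal.subset_span (Or.inl (Or.inr rfl)))
  have hJ : Ideal.map Θ (Jsame p0 n a) ≤ Ideal.span {Θ (X none - X (some a.castSucc)) *
      Θ (X none - X (some a.succ))} := by
    rw [Jsame, Ideal.map_span, Ideal.span_le]
    rintro _ ⟨g, hg | rfl, rfl⟩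
    · have hg' : g ∈ Ic p0 n a := Ideal.subset_span (hg.elim (fun hg => Or.inl (Or.inl hg)) Or.inr)
      rw [SetLike.mem_coe, ← killY_eq_self hg, hΘ, Ideal.Quotient.eq_zero_iff_mem.2 hg', map_zero]
      exact zero_mem _
    · exact Ideal.subset_span (map_mul Θ _ _)
  obtain ⟨c, hc⟩ := Ideal.mem_span_singleton'.1 (hJ (Ideal.mem_map_of_mem Θ h))
  rw [sigmaMap, LinearMap.comp_apply, AlgHom.toLinearMap_apply, LinearMap.mulLeft_apply, map_mul,
    hΘ] at hc
  simp only [Θ, toPolynomialQuotient, map_sub, aeval_X, Option.elim] at hc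
  exact Ideal.Quotient.eq_zero_iff_mem.1
    (Polynomial.eq_zero_of_X_sub_C_mul_X_sub_C_dvd (Dvd.intro_left c hc))

section Complex

variable {w : List (Fin (p0 + 1))}

lemma d1same_mk_apply (f : Fin w.length → R p0) (pr : SamePair p0 w) :
    d1same p0 n w (fun c => Submodule.Quotient.mk (f c)) pr =
      Submodule.Quotient.mk (sigmaMap p0 (w.get pr.1.1) (f pr.1.1 - f pr.1.2)) := by
  rw [map_sub]
  rfl

lemma d1diff_mk_apply (f : Fin w.length → R p0) (pr : DiffPair p0 w) :
    d1diff p0 n w (fun c => Submodule.Quotient.mk (f c)) pr =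
      Submodule.Quotient.mk (f pr.1.1 - f pr.1.2) :=
  rfl

lemma d1_d0_apply (z : C0 p0 n) : d1 p0 n w (d0 p0 n w z) = 0 := by
  obtain ⟨r, rfl⟩ := Submodule.Quotient.mk_surjective _ z
  ext pr
  · exact (d1same_mk_apply (fun _ => r) pr).trans (by simp)
  · exact (d1diff_mk_apply (fun _ => r) pr).trans (by simp)

lemma sub_mem_Ic_of_d1same_eq_zero {f : Fin w.length → R p0}
    (hx : d1same p0 n w (fun c => Submodule.Quotient.mk (f c)) = 0) {c d : Fin w.length}
    (hcd : w.get c = w.get d) : f c - f d ∈ Ic p0 n (w.get c) := by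
  wlog hlt : c < d generalizing c d
  · rcases (not_lt.1 hlt).eq_or_lt with rfl | hgt
    · simp
    · have h := neg_mem (this hcd.symm hgt)
      rwa [neg_sub, ← hcd] at h
  have hval : letter p0 w c = letter p0 w d := congrArg Fin.val hcd
  have h := (d1same_mk_apply f _).symm.trans (congrFun hx ⟨(c, d), Or.inr ⟨hval, hlt⟩, hval⟩)
  exact mem_Ic_of_sigmaMap_mem ((Submodule.Quotient.mk_eq_zero _).1 h)

lemma sub_mem_Jdiff_of_d1diff_eq_zero {f : Fin w.length → R p0}
    (hx : d1diff p0 n w (fun c => Submodule.Quotient.mk (f c)) = 0) {c d : Fin w.length}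
    (hlt : w.get c < w.get d) : f c - f d ∈ Jdiff p0 n (w.get c) (w.get d) := by
  have h := (d1diff_mk_apply f _).symm.trans (congrFun hx ⟨(c, d), Or.inl hlt, Nat.ne_of_lt hlt⟩)
  exact (Submodule.Quotient.mk_eq_zero _).1 h

end Complex

end KRPositiveBraid

open KRPositiveBraid in
/-- Theorem 19: the first `sl(n)` homology group of a positive braid knot is trivial,
for every positive integer `n`: the beginning of the Khovanov–Rozansky complex of the
closure of any positive braid word is exact at homological degree 1. -/
theorem slN_first_homology_positive_braid_trivial
    (p0 n : ℕ) (hn : 0 < n) (w : List (Fin (p0 + 1))) :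
    LinearMap.ker (d1 p0 n w) = LinearMap.range (d0 p0 n w) := by
  refine le_antisymm (fun x hx => ?_) (LinearMap.range_le_ker_iff.2 (LinearMap.ext d1_d0_apply))
  choose f hf using fun c => Submodule.Quotient.mk_surjective _ (x c)
  obtain rfl : x = fun c => Submodule.Quotient.mk (f c) := funext fun c => (hf c).symm
  have hd1 := LinearMap.mem_ker.1 hx
  obtain ⟨F, hF⟩ := exists_forall_sub_mem_Ic hn (fun c => w.get c) f
    (fun _ _ => sub_mem_Ic_of_d1same_eq_zero (congrArg Prod.fst hd1))
    (fun _ _ => sub_mem_Jdiff_of_d1diff_eq_zero (congrArg Prod.snd hd1))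
  exact ⟨Submodule.Quotient.mk F, funext fun c => (Submodule.Quotient.eq _).2 (hF c)⟩
end

section
/- Theorem 6: For every finite graph G and positive integer n, the graded Euler characteristic of the chain complex C_n(G), namely Σ_i (−1)^i Σ_j q^j rank_ℤ C_n^{i,j}(G), equals the n-th specialization of the dichromatic polynomial: P_{G,n}(q) = Σ_{s ⊆ E(G)} (−1)^{|s|} q^{n|s|} (1+q+⋯+q^n)^{k(s)}, as an identity of Laurent polynomials in q. -/
/-!
Statement 2 (Theorem 6): for every finite graph `G` and positive integer `n`, the graded
Euler characteristic `Σ_i (−1)^i Σ_j q^j rank_ℤ C_n^{i,j}(G)` of the chain complex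
`C_n(G)` equals the `n`-th specialization of the dichromatic polynomial
`P_{G,n}(q) = Σ_{s ⊆ E(G)} (−1)^{|s|} q^{n|s|} (1+q+⋯+q^n)^{k(s)}`.

The chain group `C_n^i(G) = ⊕_{|ε|=i} V^{⊗k(s_ε)}{n|ε|}` is free with basis the pairs
`(s, b)` where `s ⊆ E(G)` with `|s| = i` and `b` assigns to each connected component of
`[G : s]` a basis vector `X^{b(c)}` of `V` (so `0 ≤ b(c) ≤ n`); the degree of such a
basis element is `n|s| + Σ_c (n − b(c))`.
-/

structure MultiGraph where
  V : Type
  E : Type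
  finV : Finite V
  finE : Finite E
  ends : E → Sym2 V

attribute [instance] MultiGraph.finV MultiGraph.finE

namespace MultiGraph

def spanning (G : MultiGraph) (s : Set G.E) : SimpleGraph G.V where
  Adj a b := a ≠ b ∧ ∃ e ∈ s, G.ends e = s(a, b)
  symm := ⟨by
    rintro a b ⟨hab, e, he, h⟩
    exact ⟨hab.symm, e, he, by rw [h, Sym2.eq_swap]⟩⟩
  loopless := ⟨by rintro a ⟨h, -⟩; exact h rfl⟩

/-- `k(s)`: the number of connected components of the spanning subgraph `[G : s]`. -/
noncomputable def kcomp (G : MultiGraph) (s : Finset G.E) : ℕ :=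
  Nat.card (G.spanning ↑s).ConnectedComponent

/-- A basis element of the cube of the complex `C_n(G)`: a state `s ⊆ E(G)` together
with an assignment of a basis vector `X^{b(c)} ∈ {X^0, …, X^n}` of `V` to each
connected component `c` of `[G : s]`. -/
def CubeBasis (G : MultiGraph) (n : ℕ) :=
  Σ s : Finset G.E, ((G.spanning ↑s).ConnectedComponent → Fin (n + 1))

/-- The internal degree of a basis element: `n|s|` (the degree shift) plus
`Σ_c deg X^{b(c)} = Σ_c (n − b(c))`. -/
noncomputable def cubeDeg (G : MultiGraph) (n : ℕ) (p : CubeBasis G n) : ℕ :=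
  letI := Fintype.ofFinite (G.spanning ↑p.1).ConnectedComponent
  n * p.1.card + ∑ c, (n - (p.2 c : ℕ))

/-- `rank_ℤ C_n^{i,j}(G)`: the number of basis elements of homological degree `i`
and internal degree `j`. -/
noncomputable def chainRank (G : MultiGraph) (n : ℕ) (i j : ℕ) : ℕ :=
  Nat.card {p : CubeBasis G n // p.1.card = i ∧ cubeDeg G n p = j}

open Polynomial

/-- The graded Euler characteristic `Σ_i (−1)^i Σ_j q^j rank_ℤ C_n^{i,j}(G)`. -/
noncomputable def gradedEulerChar (G : MultiGraph) (n : ℕ) : Polynomial ℤ :=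
  ∑ᶠ i : ℕ, ∑ᶠ j : ℕ, Polynomial.C ((-1 : ℤ) ^ i * (chainRank G n i j : ℤ)) * X ^ j

/-- The `n`-th specialization of the dichromatic polynomial,
`P_{G,n}(q) = Σ_{s ⊆ E(G)} (−1)^{|s|} q^{n|s|} (1+q+⋯+q^n)^{k(s)}`. -/
noncomputable def PGn (G : MultiGraph) (n : ℕ) : Polynomial ℤ :=
  letI : Fintype G.E := Fintype.ofFinite G.E
  ∑ s : Finset G.E, Polynomial.C ((-1 : ℤ) ^ s.card) * X ^ (n * s.card) *
    (∑ a ∈ Finset.range (n + 1), X ^ a) ^ G.kcomp s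

end MultiGraph

/-!
Both sides are the signed generating function `Σ_{(s, b)} (−1)^{|s|} q^{deg (s, b)}` of the
cube basis. For the Euler characteristic this is just grouping basis elements by bidegree;
for `P_{G,n}`, once `s` is fixed, summing `q^{Σ_c (n − b(c))}` over all `b` factors as
`∏_c (1 + q + ⋯ + q^n)`.
-/

open Finset Polynomial

theorem finsum_finsum_C_mul_card_mul_X_pow {R α : Type*} [CommSemiring R] [Fintype α]
    (w : ℕ → R) (h d : α → ℕ) :
    ∑ᶠ i, ∑ᶠ j, C (w i * (Nat.card {p // h p = i ∧ d p = j} : R)) * X ^ j =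
      ∑ p, C (w (h p)) * X ^ d p := by
  classical
  rw [← finsum_sum_filter h]
  refine finsum_congr fun i => ?_
  rw [← finsum_sum_filter d]
  refine finsum_congr fun j => ?_
  rw [filter_filter]
  have hfiber : ∀ p ∈ ({p | h p = i ∧ d p = j} : Finset α),
      C (w (h p)) * X ^ d p = C (w i) * X ^ j :=
    fun p hp => by rw [(mem_filter.1 hp).2.1, (mem_filter.1 hp).2.2]
  rw [sum_congr rfl hfiber, sum_const, Nat.card_eq_fintype_card,
    Fintype.card_subtype, nsmul_eq_mul, map_mul, map_natCast]
  ring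

theorem sum_pow_sum_sub_eq_geom_sum_pow {R ι : Type*} [CommSemiring R] [Fintype ι]
    [DecidableEq ι] (x : R) (n : ℕ) :
    ∑ b : ι → Fin (n + 1), x ^ (∑ c, (n - (b c : ℕ))) =
      (∑ a ∈ range (n + 1), x ^ a) ^ Fintype.card ι := by
  have hreflect : ∑ k : Fin (n + 1), x ^ (n - (k : ℕ)) = ∑ a ∈ range (n + 1), x ^ a := by
    rw [Fin.sum_univ_eq_sum_range (fun k => x ^ (n - k)), ← sum_range_reflect]
    exact sum_congr rfl fun a ha => by rw [mem_range] at ha; congr 1; omega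
  rw [← hreflect, ← card_univ, ← prod_const, Fintype.prod_sum]
  simp_rw [prod_pow_eq_pow_sum]

namespace MultiGraph

variable (G : MultiGraph) (n : ℕ)

-- Built from the `Fintype.ofFinite` instances that `cubeDeg` and `PGn` use, so that sums over
-- the cube basis split along `Fintype.sum_sigma` into exactly the sums appearing there.
noncomputable instance : Fintype (CubeBasis G n) := by
  classical
  letI : Fintype G.E := Fintype.ofFinite G.E
  letI (s : Finset G.E) : Fintype (G.spanning ↑s).ConnectedComponent := Fintype.ofFinite _
  exact inferInstanceAs
    (Fintype (Σ s : Finset G.E, (G.spanning ↑s).ConnectedComponent → Fin (n + 1)))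

theorem gradedEulerChar_eq_sum_cubeBasis :
    gradedEulerChar G n = ∑ p : CubeBasis G n, C ((-1 : ℤ) ^ p.1.card) * X ^ cubeDeg G n p :=
  finsum_finsum_C_mul_card_mul_X_pow _ _ _

theorem PGn_eq_sum_cubeBasis :
    PGn G n = ∑ p : CubeBasis G n, C ((-1 : ℤ) ^ p.1.card) * X ^ cubeDeg G n p := by
  classical
  let : Fintype G.E := Fintype.ofFinite G.E
  let (s : Finset G.E) : Fintype (G.spanning ↑s).ConnectedComponent := Fintype.ofFinite _
  rw [PGn]
  refine ((Fintype.sum_sigma _).trans (sum_congr rfl fun s _ => ?_)).symm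
  simp only [cubeDeg, pow_add, mul_assoc, ← mul_sum, sum_pow_sum_sub_eq_geom_sum_pow, kcomp,
    Nat.card_eq_fintype_card]

end MultiGraph

theorem gradedEulerChar_eq_PGn_general (G : MultiGraph) (n : ℕ) :
    MultiGraph.gradedEulerChar G n = MultiGraph.PGn G n := by
  rw [MultiGraph.gradedEulerChar_eq_sum_cubeBasis, MultiGraph.PGn_eq_sum_cubeBasis]

theorem gradedEulerChar_eq_PGn (G : MultiGraph) (n : ℕ) (hn : 0 < n) :
    MultiGraph.gradedEulerChar G n = MultiGraph.PGn G n :=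
  gradedEulerChar_eq_PGn_general G n
end

section
/- Proposition 5: The map d of the enhanced-state complex sends C^{i,j}(G) into C^{i+1,j}(G) and satisfies d ∘ d = 0. -/
namespace MultiGraph

/-- The map between component sets induced by enlarging the state. -/
def push (G : MultiGraph) {s s' : Finset G.E} (h : s ⊆ s') :
    (G.spanning ↑s).ConnectedComponent → (G.spanning ↑s').ConnectedComponent :=
  SimpleGraph.ConnectedComponent.map (SimpleGraph.Hom.ofLE (by
    rintro a b ⟨hne, e, he, hh⟩
    exact ⟨hne, e, h he, hh⟩))

/-- An enhanced state: a state `s ⊆ E(G)` together with a labelling of the connected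
components of `[G : s]` by nonnegative integers. -/
def EState (G : MultiGraph) :=
  Σ s : Finset G.E, ((G.spanning ↑s).ConnectedComponent → ℕ)

/-- `i(S) = |s|`. -/
def iDeg (G : MultiGraph) (S : EState G) : ℕ := S.1.card

/-- `j(S) = |s| + k(s) − |l|` (an integer). -/
noncomputable def jDeg (G : MultiGraph) (S : EState G) : ℤ :=
  letI := Fintype.ofFinite (G.spanning ↑S.1).ConnectedComponent
  (S.1.card : ℤ) + (G.kcomp S.1 : ℤ) - ∑ c, (S.2 c : ℤ)

/-- The enhanced state `S_e = (s ∪ {e}, l_e)`: if `e` joins two distinct components the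
labels of the merged components add up; if both endpoints of `e` lie in a single
component its label increases by `1`; all other labels are unchanged. -/
noncomputable def addEdge (G : MultiGraph) (S : EState G) (e : G.E) : EState G := by
  classical
  exact ⟨insert e S.1, fun c' =>
    letI := Fintype.ofFinite (G.spanning ↑S.1).ConnectedComponent
    (∑ c ∈ Finset.univ.filter
        (fun c => push G (Finset.subset_insert e S.1) c = c'), S.2 c) +
    (if (∀ u v : G.V, G.ends e = s(u, v) → (G.spanning ↑S.1).Reachable u v)
        ∧ (∃ u ∈ G.ends e, (G.spanning ↑(insert e S.1)).connectedComponentMk u = c')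
      then 1 else 0)⟩

/-- The differential of the enhanced-state complex (w.r.t. an ordering `ord` of the
edges): `d(S) = Σ_{e ∈ E(G) ∖ s} (−1)^{n_e} S_e`. -/
noncomputable def eDiff (G : MultiGraph) (ord : G.E ↪ ℕ) :
    (EState G →₀ ℤ) →ₗ[ℤ] (EState G →₀ ℤ) := by
  classical
  exact Finsupp.lift _ ℤ _ (fun S =>
    letI : Fintype G.E := Fintype.ofFinite G.E
    ∑ e ∈ Finset.univ.filter (fun e => e ∉ S.1),
      ((-1 : ℤ) ^ (S.1.filter (fun f => ord f < ord e)).card) •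
        Finsupp.single (addEdge G S e) (1 : ℤ))

/-- The span of the enhanced states with `i(S) = i` and `j(S) = j`, i.e.
`C^{i,j}(G)` inside the total enhanced-state module. -/
noncomputable def CIJ (G : MultiGraph) (i : ℕ) (j : ℤ) :
    Submodule ℤ (EState G →₀ ℤ) :=
  Submodule.span ℤ {x | ∃ S : EState G, iDeg G S = i ∧ jDeg G S = j ∧
    x = Finsupp.single S (1 : ℤ)}

end MultiGraph

/-!
Adding an edge `e` to `s` either merges two components of `[G : s]`, so that `k` drops by one
and the labels of the two components are added, or joins two vertices of one component, so
that `k` is unchanged and that component's label grows by one. In both cases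
`|s| + k(s) − |l|` is preserved.

For `d ∘ d = 0`, the state `(S_e)_f` does not depend on the order of `e` and `f`: its labels are
the labels of `S` pushed forward to the components of `[G : s ∪ {e, f}]`, plus one for each of
`e`, `f` that closes a cycle, and which component receives these extra units does not depend
on the order. Exactly one of `n_e`, `n_f` grows by one when the other edge is added first, so
the two terms of `d (d S)` carrying `(S_e)_f = (S_f)_e` have opposite signs and cancel.
-/

namespace Finset

theorem sum_sum_erase_eq_zero {α M : Type*} [DecidableEq α] [AddCommMonoid M] {s : Finset α}
    {F : α → α → M} (hF : ∀ a ∈ s, ∀ b ∈ s, a ≠ b → F a b + F b a = 0) :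
    ∑ a ∈ s, ∑ b ∈ s.erase a, F a b = 0 := by
  rw [sum_sigma']
  refine sum_involution (fun p _ => ⟨p.2, p.1⟩) (fun ⟨a, b⟩ hp => ?_) (fun ⟨a, b⟩ hp _ h => ?_)
    (fun ⟨a, b⟩ hp => ?_) fun _ _ => rfl
  all_goals simp only [mem_sigma, mem_erase] at hp
  · exact hF a hp.1 b hp.2.2 hp.2.1.symm
  · exact hp.2.1 (congrArg Sigma.fst h)
  · simp only [mem_sigma, mem_erase]
    exact ⟨hp.2.2, hp.2.1.symm, hp.1⟩

end Finset

namespace SimpleGraph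

variable {V : Type*} {H : SimpleGraph V} {a b u v : V}

theorem reachable_sup_edge_iff :
    (H ⊔ edge a b).Reachable u v ↔
      H.Reachable u v ∨ (H.Reachable u a ∧ H.Reachable b v) ∨
        (H.Reachable u b ∧ H.Reachable a v) := by
  constructor
  · rintro ⟨w⟩
    induction w with
    | nil => exact .inl .rfl
    | cons hadj _ ih =>
      rcases hadj.imp id (edge_adj ..).1 with hadj | ⟨⟨rfl, rfl⟩ | ⟨rfl, rfl⟩, -⟩
      · have h := hadj.reachable
        rcases ih with ih | ⟨ih₁, ih₂⟩ | ⟨ih₁, ih₂⟩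
        · exact .inl (h.trans ih)
        · exact .inr (.inl ⟨h.trans ih₁, ih₂⟩)
        · exact .inr (.inr ⟨h.trans ih₁, ih₂⟩)
      · rcases ih with ih | ⟨-, ih⟩ | ⟨-, ih⟩
        · exact .inr (.inl ⟨.rfl, ih⟩)
        · exact .inr (.inl ⟨.rfl, ih⟩)
        · exact .inl ih
      · rcases ih with ih | ⟨-, ih⟩ | ⟨-, ih⟩
        · exact .inr (.inr ⟨.rfl, ih⟩)
        · exact .inl ih
        · exact .inr (.inr ⟨.rfl, ih⟩)
  · have hle : H ≤ H ⊔ edge a b := le_sup_left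
    have hab : (H ⊔ edge a b).Reachable a b := by
      rcases eq_or_ne a b with rfl | hne
      · exact .rfl
      · exact Adj.reachable (.inr ((edge_adj ..).2 ⟨.inl ⟨rfl, rfl⟩, hne⟩))
    rintro (h | ⟨h₁, h₂⟩ | ⟨h₁, h₂⟩)
    · exact h.mono hle
    · exact ((h₁.mono hle).trans hab).trans (h₂.mono hle)
    · exact ((h₁.mono hle).trans hab.symm).trans (h₂.mono hle)

end SimpleGraph

namespace MultiGraph

open SimpleGraph Finset

open scoped Classical

variable {G : MultiGraph} {s t u : Finset G.E} {e f : G.E} {a b c d : G.V}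

/-- The `Fintype` structures that `jDeg`, `addEdge` and `eDiff` use, so that their sums unfold
to the sums below. -/
noncomputable local instance (s : Finset G.E) : Fintype (G.spanning ↑s).ConnectedComponent :=
  Fintype.ofFinite _

noncomputable local instance : Fintype G.E := Fintype.ofFinite _

theorem exists_ends_eq (e : G.E) : ∃ a b, G.ends e = s(a, b) :=
  (G.ends e).ind fun a b => ⟨a, b, rfl⟩

theorem spanning_mono : Monotone G.spanning := by
  rintro s t hst a b ⟨hne, e, he, hab⟩
  exact ⟨hne, e, hst he, hab⟩

theorem reachable_of_subset (hst : s ⊆ t) {u v : G.V}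
    (h : (G.spanning ↑s).Reachable u v) : (G.spanning ↑t).Reachable u v :=
  h.mono (spanning_mono (coe_subset.2 hst))

theorem spanning_insert (hab : G.ends e = s(a, b)) :
    G.spanning ↑(insert e s) = G.spanning ↑s ⊔ edge a b := by
  ext u v
  simp only [spanning, sup_adj, edge_adj, coe_insert, Set.mem_insert_iff, mem_coe,
    exists_eq_or_imp, hab, Sym2.eq_iff]
  grind

theorem reachable_insert_iff (hab : G.ends e = s(a, b)) {u v : G.V} :
    (G.spanning ↑(insert e s)).Reachable u v ↔
      (G.spanning ↑s).Reachable u v ∨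
        ((G.spanning ↑s).Reachable u a ∧ (G.spanning ↑s).Reachable b v) ∨
        ((G.spanning ↑s).Reachable u b ∧ (G.spanning ↑s).Reachable a v) := by
  rw [spanning_insert hab, reachable_sup_edge_iff]

theorem reachable_insert_ends (hab : G.ends e = s(a, b)) :
    (G.spanning ↑(insert e s)).Reachable a b :=
  (reachable_insert_iff hab).2 (.inr (.inl ⟨.rfl, .rfl⟩))

/-- The case of `addEdge` in which a label is raised rather than two labels merged. -/
def EndsReachable (s : Finset G.E) (e : G.E) : Prop :=
  ∀ u v : G.V, G.ends e = s(u, v) → (G.spanning ↑s).Reachable u v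

theorem endsReachable_iff (hab : G.ends e = s(a, b)) :
    EndsReachable s e ↔ (G.spanning ↑s).Reachable a b := by
  refine ⟨fun h => h a b hab, fun h u v huv => ?_⟩
  rcases Sym2.eq_iff.1 (hab.symm.trans huv) with ⟨rfl, rfl⟩ | ⟨rfl, rfl⟩
  exacts [h, h.symm]

theorem EndsReachable.mono (hst : s ⊆ t) (h : EndsReachable s e) :
    EndsReachable t e :=
  fun u v huv => reachable_of_subset hst (h u v huv)

theorem reachable_insert_iff_of_endsReachable (h : EndsReachable s e) {u v : G.V} :
    (G.spanning ↑(insert e s)).Reachable u v ↔ (G.spanning ↑s).Reachable u v := by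
  obtain ⟨a, b, hab⟩ := exists_ends_eq e
  have hr := (endsReachable_iff hab).1 h
  refine ⟨fun h' => ?_, reachable_of_subset (subset_insert e s)⟩
  rcases (reachable_insert_iff hab).1 h' with h' | ⟨h₁, h₂⟩ | ⟨h₁, h₂⟩
  exacts [h', (h₁.trans hr).trans h₂, (h₁.trans hr.symm).trans h₂]

theorem endsReachable_insert_iff (h : EndsReachable s e) :
    EndsReachable (insert e s) f ↔ EndsReachable s f :=
  ⟨fun hf u v huv => (reachable_insert_iff_of_endsReachable h).1 (hf u v huv),
    EndsReachable.mono (subset_insert e s)⟩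

theorem reachable_cross_of_endsReachable_insert (hab : G.ends e = s(a, b))
    (hcd : G.ends f = s(c, d)) (hf : ¬EndsReachable s f) (h : EndsReachable (insert e s) f) :
    ((G.spanning ↑s).Reachable c a ∧ (G.spanning ↑s).Reachable b d) ∨
      ((G.spanning ↑s).Reachable c b ∧ (G.spanning ↑s).Reachable a d) := by
  rw [endsReachable_iff hcd] at hf h
  exact ((reachable_insert_iff hab).1 h).resolve_left hf

theorem endsReachable_insert_comm (hf : ¬EndsReachable s f) (h : EndsReachable (insert e s) f) :
    EndsReachable (insert f s) e := by
  obtain ⟨a, b, hab⟩ := exists_ends_eq e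
  obtain ⟨c, d, hcd⟩ := exists_ends_eq f
  rw [endsReachable_iff hab]
  rcases reachable_cross_of_endsReachable_insert hab hcd hf h with ⟨h₁, h₂⟩ | ⟨h₁, h₂⟩
  · exact (reachable_insert_iff hcd).2 (.inr (.inl ⟨h₁.symm, h₂.symm⟩))
  · exact (reachable_insert_iff hcd).2 (.inr (.inr ⟨h₂, h₁⟩))

theorem reachable_ends_of_endsReachable_insert (hab : G.ends e = s(a, b))
    (hcd : G.ends f = s(c, d)) (hf : ¬EndsReachable s f) (h : EndsReachable (insert e s) f) :
    (G.spanning ↑(insert e s)).Reachable a c := by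
  have hs : ∀ {u v}, (G.spanning ↑s).Reachable u v → (G.spanning ↑(insert e s)).Reachable u v :=
    reachable_of_subset (subset_insert e s)
  rcases reachable_cross_of_endsReachable_insert hab hcd hf h with ⟨h₁, -⟩ | ⟨h₁, -⟩
  · exact (hs h₁).symm
  · exact (reachable_insert_ends hab).trans (hs h₁).symm

theorem push_mk (h : s ⊆ t) (x : G.V) :
    push G h ((G.spanning ↑s).connectedComponentMk x) = (G.spanning ↑t).connectedComponentMk x :=
  rfl

theorem push_push (h₁ : s ⊆ t) (h₂ : t ⊆ u)
    (c : (G.spanning ↑s).ConnectedComponent) :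
    push G h₂ (push G h₁ c) = push G (h₁.trans h₂) c :=
  c.ind fun _ => rfl

theorem push_insert_eq_mk_ends_iff (hab : G.ends e = s(a, b))
    (c : (G.spanning ↑s).ConnectedComponent) :
    push G (subset_insert e s) c = (G.spanning ↑(insert e s)).connectedComponentMk a ↔
      c = (G.spanning ↑s).connectedComponentMk a ∨ c = (G.spanning ↑s).connectedComponentMk b := by
  induction c using ConnectedComponent.ind with | h y => ?_
  simp only [push_mk, ConnectedComponent.eq, reachable_insert_iff hab, Reachable.rfl, and_true]
  tauto

theorem push_insert_eq_mk_iff_of_not_reachable (hab : G.ends e = s(a, b)) {x : G.V}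
    (hx : ¬(G.spanning ↑(insert e s)).Reachable x a) (c : (G.spanning ↑s).ConnectedComponent) :
    push G (subset_insert e s) c = (G.spanning ↑(insert e s)).connectedComponentMk x ↔
      c = (G.spanning ↑s).connectedComponentMk x := by
  have hs : ∀ {u v}, (G.spanning ↑s).Reachable u v → (G.spanning ↑(insert e s)).Reachable u v :=
    reachable_of_subset (subset_insert e s)
  induction c using ConnectedComponent.ind with | h y => ?_
  simp only [push_mk, ConnectedComponent.eq, reachable_insert_iff hab]
  refine ⟨fun h => h.resolve_right ?_, .inl⟩
  rintro (⟨-, h⟩ | ⟨-, h⟩)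
  · exact hx ((hs h).symm.trans (reachable_insert_ends hab).symm)
  · exact hx (hs h).symm

theorem card_fiber_push_insert (hab : G.ends e = s(a, b))
    (c' : (G.spanning ↑(insert e s)).ConnectedComponent) :
    #{c | push G (subset_insert e s) c = c'} =
      1 + if c' = (G.spanning ↑(insert e s)).connectedComponentMk a ∧ ¬EndsReachable s e
        then 1 else 0 := by
  induction c' using ConnectedComponent.ind with | h x => ?_
  by_cases hx : (G.spanning ↑(insert e s)).Reachable x a
  · have hfib : ({c | push G (subset_insert e s) c =
        (G.spanning ↑(insert e s)).connectedComponentMk a} : Finset _) =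
        {(G.spanning ↑s).connectedComponentMk a, (G.spanning ↑s).connectedComponentMk b} := by
      ext c
      simp only [mem_filter, mem_univ, true_and, mem_insert, mem_singleton,
        push_insert_eq_mk_ends_iff hab]
    have hmk : (G.spanning ↑s).connectedComponentMk a ∈
        ({(G.spanning ↑s).connectedComponentMk b} : Finset _) ↔ EndsReachable s e := by
      rw [mem_singleton, ConnectedComponent.eq, endsReachable_iff hab]
    rw [ConnectedComponent.sound hx, hfib, card_insert_eq_ite, card_singleton]
    by_cases h : EndsReachable s e <;> simp [hmk, h]
  · have hfib : ({c | push G (subset_insert e s) c =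
        (G.spanning ↑(insert e s)).connectedComponentMk x} : Finset _) =
        {(G.spanning ↑s).connectedComponentMk x} := by
      ext c
      simp only [mem_filter, mem_univ, true_and, mem_singleton,
        push_insert_eq_mk_iff_of_not_reachable hab hx]
    rw [hfib, card_singleton, if_neg fun h => hx (ConnectedComponent.exact h.1)]

theorem kcomp_insert (s : Finset G.E) (e : G.E) :
    kcomp G s = kcomp G (insert e s) + if EndsReachable s e then 0 else 1 := by
  obtain ⟨a, b, hab⟩ := exists_ends_eq e
  rw [kcomp, kcomp, Nat.card_eq_fintype_card, Nat.card_eq_fintype_card, ← card_univ,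
    card_eq_sum_card_fiberwise fun c _ => mem_univ (push G (subset_insert e s) c)]
  simp only [card_fiber_push_insert hab, sum_add_distrib, sum_const, card_univ, smul_eq_mul,
    mul_one]
  by_cases h : EndsReachable s e <;> simp [h]

noncomputable def pushLabel (h : s ⊆ t) (l : (G.spanning ↑s).ConnectedComponent → ℕ) :
    (G.spanning ↑t).ConnectedComponent → ℕ :=
  fun c' => ∑ c with push G h c = c', l c

theorem sum_pushLabel (h : s ⊆ t) (l : (G.spanning ↑s).ConnectedComponent → ℕ) :
    ∑ c', pushLabel h l c' = ∑ c, l c :=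
  sum_fiberwise _ _ _

theorem pushLabel_pushLabel (h₁ : s ⊆ t) (h₂ : t ⊆ u)
    (l : (G.spanning ↑s).ConnectedComponent → ℕ) :
    pushLabel h₂ (pushLabel h₁ l) = pushLabel (h₁.trans h₂) l := by
  funext c''
  simp only [pushLabel]
  rw [sum_fiberwise_eq_sum_filter univ _ (push G h₁) l]
  simp only [mem_filter, mem_univ, true_and, push_push]

theorem pushLabel_add (h : s ⊆ t) (l m : (G.spanning ↑s).ConnectedComponent → ℕ) :
    pushLabel h (l + m) = pushLabel h l + pushLabel h m := by
  funext c'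
  simp only [pushLabel, Pi.add_apply, sum_add_distrib]

theorem pushLabel_single (h : s ⊆ t) (c : (G.spanning ↑s).ConnectedComponent) (n : ℕ) :
    pushLabel h (Pi.single c n) = Pi.single (push G h c) n := by
  funext c'
  simp only [pushLabel, Pi.single_apply, sum_ite_eq', mem_filter, mem_univ, true_and]
  exact if_congr eq_comm rfl rfl

theorem pushLabel_mk_congr (hst : s ⊆ t) (hsu : s ⊆ u) (htu : t = u)
    (l : (G.spanning ↑s).ConnectedComponent → ℕ) (x : G.V) :
    pushLabel hst l ((G.spanning ↑t).connectedComponentMk x) =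
      pushLabel hsu l ((G.spanning ↑u).connectedComponentMk x) := by
  subst htu; rfl

theorem exists_mem_ends_mk_eq_iff (hab : G.ends e = s(a, b))
    (c' : (G.spanning ↑(insert e s)).ConnectedComponent) :
    (∃ u ∈ G.ends e, (G.spanning ↑(insert e s)).connectedComponentMk u = c') ↔
      (G.spanning ↑(insert e s)).connectedComponentMk a = c' := by
  simp only [hab, Sym2.mem_iff, exists_eq_or_imp, exists_eq_left,
    ← ConnectedComponent.sound (reachable_insert_ends hab), or_self]

theorem addEdge_eq (S : EState G) (hab : G.ends e = s(a, b)) :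
    addEdge G S e = ⟨insert e S.1, pushLabel (subset_insert e S.1) S.2 +
      Pi.single ((G.spanning ↑(insert e S.1)).connectedComponentMk a)
        (if EndsReachable S.1 e then 1 else 0)⟩ := by
  refine congrArg (Sigma.mk (insert e S.1)) (funext fun c' => ?_)
  show (∑ c with push G (subset_insert e S.1) c = c', S.2 c) +
      (if EndsReachable S.1 e ∧
          ∃ u ∈ G.ends e, (G.spanning ↑(insert e S.1)).connectedComponentMk u = c'
        then 1 else 0) = pushLabel (subset_insert e S.1) S.2 c' +
        Pi.single (M := fun _ => ℕ) _ _ c'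
  rw [exists_mem_ends_mk_eq_iff hab, Pi.single_apply]
  by_cases h : EndsReachable S.1 e <;> simp [pushLabel, h, eq_comm]

theorem iDeg_addEdge {S : EState G} (he : e ∉ S.1) :
    iDeg G (addEdge G S e) = iDeg G S + 1 :=
  card_insert_of_notMem he

theorem jDeg_addEdge {S : EState G} (he : e ∉ S.1) :
    jDeg G (addEdge G S e) = jDeg G S := by
  obtain ⟨a, b, hab⟩ := exists_ends_eq e
  rw [addEdge_eq S hab]
  unfold jDeg
  dsimp only
  rw [card_insert_of_notMem he, kcomp_insert S.1 e, ← Nat.cast_sum, ← Nat.cast_sum]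
  simp only [Pi.add_apply, sum_add_distrib, sum_pushLabel, sum_pi_single', mem_univ, if_true]
  split_ifs <;> push_cast <;> ring

theorem estate_mk_ext (hst : s = t)
    {l : (G.spanning ↑s).ConnectedComponent → ℕ} {m : (G.spanning ↑t).ConnectedComponent → ℕ}
    (hlm : ∀ x, l ((G.spanning ↑s).connectedComponentMk x) =
      m ((G.spanning ↑t).connectedComponentMk x)) :
    (⟨s, l⟩ : EState G) = ⟨t, m⟩ := by
  subst hst
  exact congrArg _ (funext fun c => c.ind hlm)

theorem addEdge_addEdge (S : EState G) (hab : G.ends e = s(a, b)) (hcd : G.ends f = s(c, d)) :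
    addEdge G (addEdge G S e) f = ⟨insert f (insert e S.1),
      pushLabel ((subset_insert e S.1).trans (subset_insert f _)) S.2 +
        Pi.single ((G.spanning ↑(insert f (insert e S.1))).connectedComponentMk a)
          (if EndsReachable S.1 e then 1 else 0) +
        Pi.single ((G.spanning ↑(insert f (insert e S.1))).connectedComponentMk c)
          (if EndsReachable (insert e S.1) f then 1 else 0)⟩ := by
  rw [addEdge_eq S hab]
  refine (addEdge_eq _ hcd).trans ?_
  dsimp only
  rw [pushLabel_add, pushLabel_pushLabel, pushLabel_single, push_mk]

/-- The labels raised by `e` and `f` do not depend on the order in which the two edges are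
added: if `f` closes a cycle only once `e` is present, then `e` closes one once `f` is present,
and then the endpoints of `e` and `f` lie in one component. -/
theorem ite_endsReachable_add_comm (hab : G.ends e = s(a, b)) (hcd : G.ends f = s(c, d))
    (x : G.V) :
    ((if (G.spanning ↑(insert f (insert e s))).Reachable x a then
        if EndsReachable s e then 1 else 0 else 0) +
      if (G.spanning ↑(insert f (insert e s))).Reachable x c then
        if EndsReachable (insert e s) f then 1 else 0 else 0 : ℕ) =
      (if (G.spanning ↑(insert f (insert e s))).Reachable x c then
        if EndsReachable s f then 1 else 0 else 0) +
      if (G.spanning ↑(insert f (insert e s))).Reachable x a then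
        if EndsReachable (insert f s) e then 1 else 0 else 0 := by
  by_cases he : EndsReachable s e <;> by_cases hf : EndsReachable s f
  · simp only [he, hf, EndsReachable.mono (subset_insert _ s)]
    exact add_comm _ _
  · have hf' : ¬EndsReachable (insert e s) f := fun h => hf ((endsReachable_insert_iff he).1 h)
    simp [he, hf, hf', EndsReachable.mono (subset_insert f s) he]
  · have he' : ¬EndsReachable (insert f s) e := fun h => he ((endsReachable_insert_iff hf).1 h)
    simp [he, hf, he', EndsReachable.mono (subset_insert e s) hf]
  · by_cases hef : EndsReachable (insert e s) f
    · have hac := reachable_of_subset (subset_insert f _)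
        (reachable_ends_of_endsReachable_insert hab hcd hf hef)
      simp only [he, hf, hef, endsReachable_insert_comm hf hef, if_true, if_false, ite_self,
        zero_add]
      exact if_congr ⟨fun h => h.trans hac.symm, fun h => h.trans hac⟩ rfl rfl
    · have hfe : ¬EndsReachable (insert f s) e := fun h => hef (endsReachable_insert_comm he h)
      simp [he, hf, hef, hfe]

theorem addEdge_comm (S : EState G) (e f : G.E) :
    addEdge G (addEdge G S e) f = addEdge G (addEdge G S f) e := by
  obtain ⟨a, b, hab⟩ := exists_ends_eq e
  obtain ⟨c, d, hcd⟩ := exists_ends_eq f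
  rw [addEdge_addEdge S hab hcd, addEdge_addEdge S hcd hab]
  refine estate_mk_ext (insert_comm f e S.1) fun x => ?_
  simp only [Pi.add_apply, Pi.single_apply, ConnectedComponent.eq, add_assoc]
  rw [pushLabel_mk_congr _ ((subset_insert e S.1).trans (subset_insert f _))
    (insert_comm e f S.1), insert_comm e f S.1]
  exact congrArg _ (ite_endsReachable_add_comm hab hcd x)

/-- The sign `(-1)^{n_e}` of `S_e` in `d S`. -/
def edgeSign (ord : G.E ↪ ℕ) (s : Finset G.E) (e : G.E) : ℤ :=
  (-1) ^ #(s.filter fun f => ord f < ord e)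

theorem edgeSign_mul_edgeSign_insert (ord : G.E ↪ ℕ) (he : e ∉ s) (hf : f ∉ s) (hef : e ≠ f) :
    edgeSign ord s e * edgeSign ord (insert e s) f =
      -(edgeSign ord s f * edgeSign ord (insert f s) e) := by
  have of_lt {e f : G.E} (he : e ∉ s) (h : ord e < ord f) :
      edgeSign ord s e * edgeSign ord (insert e s) f =
        -(edgeSign ord s f * edgeSign ord (insert f s) e) := by
    rw [edgeSign, edgeSign, edgeSign, edgeSign, filter_insert, if_pos h, filter_insert,
      if_neg h.not_gt, card_insert_of_notMem fun h => he (mem_filter.1 h).1, pow_succ]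
    ring
  rcases lt_or_gt_of_ne (ord.injective.ne hef) with h | h
  · exact of_lt he h
  · rw [of_lt hf h, neg_neg]

theorem eDiff_single (ord : G.E ↪ ℕ) (S : EState G) :
    eDiff G ord (Finsupp.single S 1) =
      ∑ e with e ∉ S.1, edgeSign ord S.1 e • Finsupp.single (addEdge G S e) 1 := by
  rw [eDiff, Finsupp.lift_apply, Finsupp.sum_single_index (by simp), one_smul]
  rfl

theorem CIJ_map_eDiff_le (ord : G.E ↪ ℕ) (i : ℕ) (j : ℤ) :
    (CIJ G i j).map (eDiff G ord) ≤ CIJ G (i + 1) j := by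
  rw [CIJ, Submodule.map_span_le]
  rintro _ ⟨S, rfl, rfl, rfl⟩
  rw [eDiff_single]
  refine Submodule.sum_mem _ fun e he => Submodule.smul_mem _ _ (Submodule.subset_span ?_)
  have he : e ∉ S.1 := (mem_filter.1 he).2
  exact ⟨addEdge G S e, iDeg_addEdge he, jDeg_addEdge he, rfl⟩

theorem eDiff_comp_eDiff (ord : G.E ↪ ℕ) : (eDiff G ord).comp (eDiff G ord) = 0 := by
  refine Finsupp.basisSingleOne.ext fun S => ?_
  have hfst : ∀ e, (addEdge G S e).1 = insert e S.1 := fun _ => rfl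
  have hfilter : ∀ e,
      ({f | f ∉ insert e S.1} : Finset G.E) = ({f | f ∉ S.1} : Finset G.E).erase e := by
    intro e; ext f; simp only [mem_filter, mem_univ, true_and, mem_insert, not_or, mem_erase]
  simp only [Finsupp.coe_basisSingleOne, LinearMap.comp_apply, LinearMap.zero_apply, eDiff_single,
    map_sum, map_zsmul, smul_sum, smul_smul, hfst, hfilter]
  refine sum_sum_erase_eq_zero fun e he f hf hef => ?_
  rw [addEdge_comm S f e, ← add_smul, edgeSign_mul_edgeSign_insert ord (mem_filter.1 he).2
    (mem_filter.1 hf).2 hef, neg_add_cancel, zero_smul]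

end MultiGraph

/-- Proposition 5: `d` maps `C^{i,j}(G)` into `C^{i+1,j}(G)` and `d ∘ d = 0`. -/
theorem eDiff_graded_and_squared_zero (G : MultiGraph) (ord : G.E ↪ ℕ) :
    (∀ (i : ℕ) (j : ℤ),
      (MultiGraph.CIJ G i j).map (MultiGraph.eDiff G ord) ≤ MultiGraph.CIJ G (i + 1) j) ∧
    (MultiGraph.eDiff G ord).comp (MultiGraph.eDiff G ord) = 0 :=
  ⟨MultiGraph.CIJ_map_eDiff_le ord, MultiGraph.eDiff_comp_eDiff ord⟩
end
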